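/- Tight positive cut-off of the filter protocol: for every n > 0, the filter protocol F_n with initial register value 0 and target s_n has a tight positive cut-off equal to n; that is, for every m ≥ n, Post*({⟨s_0^m, 0⟩}) ⊆ Pre*([s_n]) (so s_n is reached almost surely with m processes), while for m = n−1 this inclusion fails (indeed s_n is not reachable at all from ⟨s_0^{n−1}, 0⟩). -/

import Mathlib

/-- Operation type of a register protocol: read or write. -/
inductive Op : Type
  | R : Op
  | W : Op
deriving DecidableEq

instance instFintypeOp : Fintype Op :=
  ⟨{Op.R, Op.W}, by intro x; cases x <;> simp⟩

/-- A location has at least one outgoing transition. -/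
def Nonblock {Q D : Type*} (T : Set (Q × Op × D × Q)) : Prop :=
  ∀ q : Q, ∃ op d q', (q, op, d, q') ∈ T

/-- Whenever a read transition exists from `q`, reads of every datum are enabled in `q`. -/
def ReadTotal {Q D : Type*} (T : Set (Q × Op × D × Q)) : Prop :=
  ∀ q d' q', (q, Op.R, d', q') ∈ T → ∀ d : D, ∃ qd, (q, Op.R, d, qd) ∈ T

/-- One step of the distributed system associated with transition set `T`:
a configuration is a pair of a finite multiset of locations and a register datum. -/
def IsStep {Q D : Type*} [DecidableEq Q] (T : Set (Q × Op × D × Q)) :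
    Multiset Q × D → Multiset Q × D → Prop := fun γ γ' =>
  ∃ q op d'' q', (q, op, d'', q') ∈ T ∧ q ∈ γ.1 ∧
    γ'.1 = γ.1 - {q} + {q'} ∧
    ((op = Op.R ∧ γ.2 = d'' ∧ γ'.2 = d'') ∨ (op = Op.W ∧ γ'.2 = d''))

/-- Reachability: reflexive-transitive closure of the step relation. -/
def Reach {Q D : Type*} [DecidableEq Q] (T : Set (Q × Op × D × Q)) :
    Multiset Q × D → Multiset Q × D → Prop :=
  Relation.ReflTransGen (IsStep T)

/-- `PostStar T S` is the set of configurations reachable from some configuration of `S`. -/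
def PostStar {Q D : Type*} [DecidableEq Q] (T : Set (Q × Op × D × Q))
    (S : Set (Multiset Q × D)) : Set (Multiset Q × D) :=
  {γ' | ∃ γ ∈ S, Reach T γ γ'}

/-- `PreStar T S` is the set of configurations from which some configuration of `S`
is reachable. -/
def PreStar {Q D : Type*} [DecidableEq Q] (T : Set (Q × Op × D × Q))
    (S : Set (Multiset Q × D)) : Set (Multiset Q × D) :=
  {γ | ∃ γ' ∈ S, Reach T γ γ'}

/-- `[qf]`: configurations containing at least one process in location `qf`. -/
def TargetSet {Q D : Type*} [DecidableEq Q] (qf : Q) : Set (Multiset Q × D) :=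
  {γ | 0 < γ.1.count qf}

/-- The order `⪯` on configurations: same register content, same support,
and componentwise smaller multiset. -/
def ConfLE {Q D : Type*} [DecidableEq Q] (γ γ' : Multiset Q × D) : Prop :=
  γ.2 = γ'.2 ∧ γ.1.toFinset = γ'.1.toFinset ∧ γ.1 ≤ γ'.1

/-- Upward closure of a set of configurations with respect to `⪯`. -/
def UpSet {Q D : Type*} [DecidableEq Q] (B : Set (Multiset Q × D)) :
    Set (Multiset Q × D) :=
  {γ' | ∃ γ ∈ B, ConfLE γ γ'}

/-- Transitions of the filter protocol `F_n` (for `n > 0`): locations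
`s_0, …, s_n` are `Fin (n+1)`, data `0, …, n−1` are `Fin n`. Transitions:
`(s_0, W, 0, s_0)`; `(s_i, R, i, s_{i+1})` for `0 ≤ i ≤ n−1`;
`(s_i, W, i, s_0)` for `1 ≤ i ≤ n−1`; and read self-loops `(s, R, d, s)` for
every pair `(s, d)` for which no other read transition is specified. -/
def FilterT (n : ℕ) : Set (Fin (n + 1) × Op × Fin n × Fin (n + 1)) := fun t =>
  match t with
  | (s, Op.W, d, s') =>
      ((s : ℕ) = 0 ∧ (d : ℕ) = 0 ∧ (s' : ℕ) = 0) ∨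
      (1 ≤ (s : ℕ) ∧ (s : ℕ) ≤ n - 1 ∧ (d : ℕ) = (s : ℕ) ∧ (s' : ℕ) = 0)
  | (s, Op.R, d, s') =>
      ((s : ℕ) ≤ n - 1 ∧ (d : ℕ) = (s : ℕ) ∧ (s' : ℕ) = (s : ℕ) + 1) ∨
      (¬ ((s : ℕ) ≤ n - 1 ∧ (d : ℕ) = (s : ℕ)) ∧ s' = s)

/-!
From any configuration with no process at `s_n`, every process at `s_i` (`i < n`) can write
`i` and fall back to `s_0`, after which a write of `0` restores the initial register. From
`⟨s_0^m, 0⟩` all processes read `0` and move to `s_1`; one of them writes `1` and falls back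
while the others read `1` and move to `s_2`, and so on. Each level sacrifices one process,
so `m ≥ n` processes suffice to reach `s_n`.

Conversely, passing level `i` needs the register to hold `i`, which only a process at `s_i`
can write, and writing sends it back to `s_0`. Hence the processes at levels `> k`, together
with the register when it holds a value `> k`, never number more than `m - k`; with `m < n`
processes, `s_n` stays empty.
-/

open Multiset Relation

theorem Multiset.countP_mono_left {α : Type*} {p q : α → Prop} [DecidablePred p]
    [DecidablePred q] (s : Multiset α) (h : ∀ x, p x → q x) : s.countP p ≤ s.countP q := by
  simp only [countP_eq_card_filter]
  exact card_le_card (monotone_filter_right s h)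

section RegisterProtocol

variable {Q D : Type*} [DecidableEq Q] {T : Set (Q × Op × D × Q)}

theorem isStep_iff {γ γ' : Multiset Q × D} :
    IsStep T γ γ' ↔ ∃ q op d q' A, (q, op, d, q') ∈ T ∧ γ.1 = q ::ₘ A ∧ γ'.1 = q' ::ₘ A ∧
      ((op = Op.R ∧ γ.2 = d ∧ γ'.2 = d) ∨ (op = Op.W ∧ γ'.2 = d)) := by
  constructor
  · rintro ⟨q, op, d, q', hT, hq, hμ, hop⟩
    refine ⟨q, op, d, q', γ.1.erase q, hT, (cons_erase hq).symm, ?_, hop⟩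
    rw [hμ, sub_singleton, add_comm, singleton_add]
  · rintro ⟨q, op, d, q', A, hT, hμ, hμ', hop⟩
    refine ⟨q, op, d, q', hT, hμ ▸ mem_cons_self q A, ?_, hop⟩
    rw [hμ, hμ', sub_singleton, erase_cons_head, add_comm, singleton_add]

theorem isStep_read {q q' : Q} {d : D} (h : (q, Op.R, d, q') ∈ T) (A : Multiset Q) :
    IsStep T (q ::ₘ A, d) (q' ::ₘ A, d) :=
  isStep_iff.2 ⟨q, _, d, q', A, h, rfl, rfl, Or.inl ⟨rfl, rfl, rfl⟩⟩

theorem isStep_write {q q' : Q} {d' : D} (h : (q, Op.W, d', q') ∈ T) (A : Multiset Q)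
    (d : D) : IsStep T (q ::ₘ A, d) (q' ::ₘ A, d') :=
  isStep_iff.2 ⟨q, _, d', q', A, h, rfl, rfl, Or.inr ⟨rfl, rfl⟩⟩

theorem IsStep.card_eq {γ γ' : Multiset Q × D} (h : IsStep T γ γ') :
    card γ'.1 = card γ.1 := by
  obtain ⟨q, -, -, q', A, -, hμ, hμ', -⟩ := isStep_iff.1 h
  rw [hμ, hμ', card_cons, card_cons]

theorem Reach.card_eq {γ γ' : Multiset Q × D} (h : Reach T γ γ') :
    card γ'.1 = card γ.1 := by
  induction h with
  | refl => rfl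
  | tail _ hstep ih => rw [hstep.card_eq, ih]

theorem IsStep.add_left {γ γ' : Multiset Q × D} (h : IsStep T γ γ') (A : Multiset Q) :
    IsStep T (A + γ.1, γ.2) (A + γ'.1, γ'.2) := by
  obtain ⟨q, op, d, q', B, hT, hμ, hμ', hop⟩ := isStep_iff.1 h
  exact isStep_iff.2 ⟨q, op, d, q', A + B, hT, by rw [hμ, add_cons], by rw [hμ', add_cons], hop⟩

theorem Reach.add_left {μ μ' : Multiset Q} {d d' : D} (h : Reach T (μ, d) (μ', d'))
    (A : Multiset Q) : Reach T (A + μ, d) (A + μ', d') :=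
  ReflTransGen.lift (p := IsStep T) (fun γ : Multiset Q × D => (A + γ.1, γ.2))
    (fun _ _ hs => hs.add_left A) _ _ h

theorem reach_replicate_read {q q' : Q} {d : D} (h : (q, Op.R, d, q') ∈ T) (c : ℕ) :
    Reach T (replicate c q, d) (replicate c q', d) := by
  induction c with
  | zero => exact ReflTransGen.refl
  | succ c ih =>
    rw [replicate_succ, replicate_succ]
    have hrest := ih.add_left {q'}
    rw [singleton_add, singleton_add] at hrest
    exact ReflTransGen.head (isStep_read h _) hrest

theorem mem_preStar_of_reach {S : Set (Multiset Q × D)} {γ γ' : Multiset Q × D}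
    (h : Reach T γ γ') (h' : γ' ∈ PreStar T S) : γ ∈ PreStar T S := by
  obtain ⟨γ'', hS, h''⟩ := h'
  exact ⟨γ'', hS, h.trans h''⟩

end RegisterProtocol

namespace FilterT

variable {n : ℕ}

theorem read_mem (i : Fin n) : (i.castSucc, Op.R, i, i.succ) ∈ FilterT n :=
  Or.inl ⟨by simp only [Fin.val_castSucc]; omega, rfl, rfl⟩

theorem write_mem (i : Fin n) : (i.castSucc, Op.W, i, 0) ∈ FilterT n := by
  rcases Nat.eq_zero_or_pos (i : ℕ) with hi | hi
  · exact Or.inl ⟨hi, hi, rfl⟩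
  · exact Or.inr ⟨hi, by simp only [Fin.val_castSucc]; omega, rfl, rfl⟩

theorem step_cases {γ γ' : Multiset (Fin (n + 1)) × Fin n} (h : IsStep (FilterT n) γ γ') :
    ∃ q q' A, γ.1 = q ::ₘ A ∧ γ'.1 = q' ::ₘ A ∧
      (((q : ℕ) = γ.2 ∧ (q' : ℕ) = q + 1 ∧ γ'.2 = γ.2) ∨ (q' = q ∧ γ'.2 = γ.2) ∨
        ((q' : ℕ) = 0 ∧ (γ'.2 : ℕ) ≤ q)) := by
  obtain ⟨q, op, d, q', A, hT, hμ, hμ', hop⟩ := isStep_iff.1 h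
  refine ⟨q, q', A, hμ, hμ', ?_⟩
  rcases hop with ⟨rfl, hr, hr'⟩ | ⟨rfl, hr'⟩
  · rcases hT with ⟨-, hd, hq'⟩ | ⟨-, rfl⟩
    · exact Or.inl ⟨by rw [hr, hd], hq', by rw [hr, hr']⟩
    · exact Or.inr (Or.inl ⟨rfl, by rw [hr, hr']⟩)
  · rcases hT with ⟨hq, hd, hq'⟩ | ⟨-, -, hd, hq'⟩
    all_goals exact Or.inr (Or.inr ⟨hq', by omega⟩)

def countAtLeast (k : ℕ) (γ : Multiset (Fin (n + 1)) × Fin n) : ℕ :=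
  γ.1.countP (fun q : Fin (n + 1) => k ≤ (q : ℕ)) + if k ≤ (γ.2 : ℕ) then 1 else 0

def LevelBound (γ : Multiset (Fin (n + 1)) × Fin n) : Prop :=
  ∀ k, countAtLeast (k + 1) γ ≤ card γ.1 - k

theorem LevelBound.step {γ γ' : Multiset (Fin (n + 1)) × Fin n} (h : LevelBound γ)
    (hs : IsStep (FilterT n) γ γ') : LevelBound γ' := by
  obtain ⟨q, q', A, hμ, hμ', hcase⟩ := step_cases hs
  intro k
  have hk := h k
  simp only [LevelBound, countAtLeast, hμ, hμ', countP_cons, card_cons] at h hk ⊢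
  rcases hcase with ⟨hq, hq', hr⟩ | ⟨rfl, hr⟩ | ⟨hq', hr⟩
  · rw [hr]
    cases k with
    | zero =>
      have := countP_le_card (fun q : Fin (n + 1) => 0 + 1 ≤ (q : ℕ)) A
      split_ifs at hk ⊢ <;> omega
    | succ j =>
      have hprev := h j
      have : A.countP (fun x : Fin (n + 1) => j + 1 + 1 ≤ (x : ℕ)) ≤
          A.countP (fun x : Fin (n + 1) => j + 1 ≤ (x : ℕ)) :=
        A.countP_mono_left fun _ hx => by omega
      split_ifs at hk hprev ⊢ <;> omega
  · rw [hr]; exact hk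
  · split_ifs at hk ⊢ <;> omega

theorem LevelBound.reach {γ γ' : Multiset (Fin (n + 1)) × Fin n} (h : LevelBound γ)
    (hr : Reach (FilterT n) γ γ') : LevelBound γ' := by
  induction hr with
  | refl => exact h
  | tail _ hs ih => exact ih.step hs

theorem levelBound_replicate_zero (hn : 0 < n) (m : ℕ) :
    LevelBound (replicate m (0 : Fin (n + 1)), (⟨0, hn⟩ : Fin n)) := by
  intro k
  rw [countAtLeast, countP_eq_zero.2 fun q hq => by simp [eq_of_mem_replicate hq]]
  simp

theorem not_mem_preStar_of_lt (hn : 0 < n) {m : ℕ} (hm : m < n) :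
    (replicate m (0 : Fin (n + 1)), (⟨0, hn⟩ : Fin n)) ∉
      PreStar (FilterT n) (TargetSet (Fin.last n)) := by
  rintro ⟨γ, hγ, hr⟩
  have hbound := (levelBound_replicate_zero hn m).reach hr (n - 1)
  have hcard : card γ.1 = m := by simpa using hr.card_eq
  have hlast : 0 < γ.1.countP (fun q : Fin (n + 1) => n - 1 + 1 ≤ (q : ℕ)) :=
    countP_pos_of_mem (count_pos.1 hγ) (by rw [Fin.val_last]; omega)
  simp only [countAtLeast] at hbound
  omega

theorem exists_reach_replicate_zero {μ : Multiset (Fin (n + 1))} (h : Fin.last n ∉ μ)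
    (d : Fin n) : ∃ d', Reach (FilterT n) (μ, d) (replicate (card μ) 0, d') := by
  induction μ using Multiset.induction_on generalizing d with
  | empty => exact ⟨d, ReflTransGen.refl⟩
  | cons q μ ih =>
    obtain ⟨hq, hμ⟩ : q ≠ Fin.last n ∧ Fin.last n ∉ μ := by simpa [eq_comm] using h
    obtain ⟨d', hreach⟩ := ih hμ d
    have hwrite := isStep_write (write_mem (q.castPred hq)) (replicate (card μ) 0) d'
    rw [Fin.castSucc_castPred, ← replicate_succ] at hwrite
    refine ⟨q.castPred hq, ?_⟩
    have hrest := hreach.add_left {q}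
    rw [singleton_add, singleton_add] at hrest
    rw [card_cons]
    exact hrest.tail hwrite

theorem reach_replicate_zero {μ : Multiset (Fin (n + 1))} (hn : 0 < n)
    (h : Fin.last n ∉ μ) (hμ : μ ≠ 0) (d : Fin n) :
    Reach (FilterT n) (μ, d) (replicate (card μ) 0, ⟨0, hn⟩) := by
  obtain ⟨d', hreach⟩ := exists_reach_replicate_zero h d
  obtain ⟨k, hk⟩ := Nat.exists_eq_succ_of_ne_zero (mt card_eq_zero.1 hμ)
  rw [hk, replicate_succ] at hreach ⊢
  exact hreach.tail (isStep_write (write_mem ⟨0, hn⟩) _ d')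

theorem reach_climb (i : ℕ) (hi : i < n) (c : ℕ) :
    Reach (FilterT n) (replicate (i + c + 1) 0, ⟨0, by omega⟩)
      (replicate i 0 + replicate (c + 1) (Fin.succ ⟨i, hi⟩), ⟨i, hi⟩) := by
  induction i generalizing c with
  | zero =>
    rw [replicate_zero, zero_add, zero_add]
    exact reach_replicate_read (read_mem ⟨0, hi⟩) (c + 1)
  | succ i ih =>
    have hclimb := ih (by omega) (c + 1)
    rw [replicate_succ _ (c + 1), add_cons] at hclimb
    have hwrite := isStep_write (write_mem ⟨i + 1, hi⟩) (replicate i 0 + replicate (c + 1)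
      (Fin.succ ⟨i, by omega⟩)) ⟨i, by omega⟩
    rw [← cons_add 0, ← replicate_succ] at hwrite
    have hread := (reach_replicate_read (read_mem ⟨i + 1, hi⟩) (c + 1)).add_left
      (replicate (i + 1) 0)
    rw [show i + 1 + c + 1 = i + (c + 1) + 1 by omega]
    exact (hclimb.tail hwrite).trans hread

theorem mem_preStar_of_le_card (hn : 0 < n) {μ : Multiset (Fin (n + 1))} (hμ : n ≤ card μ)
    (d : Fin n) : (μ, d) ∈ PreStar (FilterT n) (TargetSet (Fin.last n)) := by
  by_cases hlast : Fin.last n ∈ μ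
  · exact ⟨(μ, d), count_pos.2 hlast, ReflTransGen.refl⟩
  have hne : μ ≠ 0 := card_pos.1 (by omega)
  refine mem_preStar_of_reach (reach_replicate_zero hn hlast hne d) ?_
  obtain ⟨c, hc⟩ : ∃ c, card μ = n - 1 + c + 1 := ⟨card μ - n, by omega⟩
  rw [hc]
  refine ⟨_, ?_, reach_climb (n - 1) (by omega) c⟩
  refine count_pos.2 (mem_add.2 (Or.inr (mem_replicate.2 ⟨by omega, ?_⟩)))
  rw [Fin.ext_iff, Fin.val_succ, Fin.val_last, Fin.val_mk]
  omega

end FilterT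

/-- tight positive cut-off of the filter protocol: for every
`m ≥ n`, `Post*({⟨s_0^m, 0⟩}) ⊆ Pre*([s_n])` (so `s_n` is reached almost surely
with `m` processes), while with `n − 1` processes `s_n` is not reachable at all:
`⟨s_0^{n−1}, 0⟩ ∉ Pre*([s_n])`. -/
theorem stmt_15 (n : ℕ) (hn : 0 < n) :
    (∀ m : ℕ, n ≤ m →
      PostStar (FilterT n)
          {(Multiset.replicate m (⟨0, by omega⟩ : Fin (n + 1)), (⟨0, hn⟩ : Fin n))} ⊆
        PreStar (FilterT n) (TargetSet (Fin.last n))) ∧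
    (Multiset.replicate (n - 1) (⟨0, by omega⟩ : Fin (n + 1)), (⟨0, hn⟩ : Fin n)) ∉
      PreStar (FilterT n) (TargetSet (Fin.last n)) := by
  refine ⟨?_, FilterT.not_mem_preStar_of_lt hn (by omega)⟩
  rintro m hm γ ⟨_, rfl, hreach⟩
  exact FilterT.mem_preStar_of_le_card hn (by simpa [hreach.card_eq] using hm) γ.2
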